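/- Let L be a free ℤ-module of finite rank equipped with a symmetric bilinear form B : L × L → ℤ, and suppose there exists a vector v ∈ L with B(v,v) ∈ {1, −1, 2, −2}. Then the determinant homomorphism det : O(L,B) → ℤˣ is surjective and split: there exists a group homomorphism s : ℤˣ → O(L,B) with det ∘ s = id. -/

import Mathlib

/-! A vector `v` with `B v v ∣ 2` is reflective: `s_v x = x - (2 B(v,x) / B(v,v)) • v` is an
integral isometry of `B`. It is an involution, and by the matrix determinant lemma its
determinant is `1 - 2 = -1`, so `-1 ↦ s_v` splits `det`. -/

/-- The group of `ℤ`-linear automorphisms of `M` preserving a pairing `b : M → M → ℤ`.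
For `b` a symmetric bilinear form this is the orthogonal group `O(M, b)`. -/
def isometryGroup {M : Type*} [AddCommGroup M] [Module ℤ M]
    (b : M → M → ℤ) : Subgroup (M ≃ₗ[ℤ] M) where
  carrier := {g | ∀ x y, b (g x) (g y) = b x y}
  one_mem' := fun _ _ => rfl
  mul_mem' := by
    intro a c ha hc x y
    show b (a (c x)) (a (c y)) = b x y
    rw [ha, hc]
  inv_mem' := by
    intro g hg x y
    have h := hg (g.symm x) (g.symm y)
    simp only [LinearEquiv.apply_symm_apply] at h
    exact h.symm ▸ rfl

namespace Module

variable {R M : Type*} [CommRing R] [AddCommGroup M] [Module R M] [Module.Free R M]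
  [Module.Finite R M]

theorem det_preReflection (x : M) (f : Dual R M) :
    LinearMap.det (preReflection x f) = 1 - f x := by
  classical
  let b := Module.Free.chooseBasis R M
  rw [← LinearMap.det_toMatrix b, preReflection, map_sub, LinearMap.toMatrix_id,
    LinearMap.toMatrix_smulRight, Matrix.vecMulVec_eq Unit, Matrix.det_one_sub_mul_comm,
    Matrix.det_unique]
  simp only [PUnit.default_eq_unit, Matrix.sub_apply, Matrix.one_apply_eq,
    Matrix.replicateRow_mul_replicateCol_apply, sub_right_inj]
  conv_rhs => rw [← b.sum_repr x]
  simp only [dotProduct, Function.comp_apply, map_sum, map_smul, smul_eq_mul, mul_comm]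

theorem det_reflection {x : M} {f : Dual R M} (h : f x = 2) : (reflection h).det = -1 := by
  ext
  rw [LinearEquiv.coe_det]
  change LinearMap.det (preReflection x f) = _
  rw [det_preReflection, h]
  norm_num

end Module

def Int.unitsHomOfMulSelfEqOne {G : Type*} [Group G] (g : G) (hg : g * g = 1) : ℤˣ →* G where
  toFun u := if u = 1 then 1 else g
  map_one' := if_pos rfl
  map_mul' a b := by
    rcases Int.units_eq_one_or a with rfl | rfl <;> rcases Int.units_eq_one_or b with rfl | rfl <;>
      simp [hg]

theorem exists_monoidHom_comp_eq_id_of_map_eq_neg_one {G : Type*} [Group G] (φ : G →* ℤˣ)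
    {g : G} (hg : g * g = 1) (hφ : φ g = -1) : ∃ s : ℤˣ →* G, φ.comp s = MonoidHom.id ℤˣ :=
  ⟨Int.unitsHomOfMulSelfEqOne g hg, by
    ext u
    rcases Int.units_eq_one_or u with rfl | rfl
    · simp [Int.unitsHomOfMulSelfEqOne]
    · simp [Int.unitsHomOfMulSelfEqOne, hφ]⟩

/-- Let `L` be a lattice (a free `ℤ`-module of finite rank with symmetric bilinear form
`B`) containing a vector `v` with `B v v ∈ {1, -1, 2, -2}`.  Then the determinant
homomorphism `det : O(L,B) → ℤˣ` is surjective and split: there is a group homomorphism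
`s : ℤˣ → O(L,B)` with `det ∘ s = id`. -/
theorem det_of_orthogonal_group_surjective_and_split
    {L : Type*} [AddCommGroup L] [Module ℤ L] [Module.Free ℤ L] [Module.Finite ℤ L]
    (B : L →ₗ[ℤ] L →ₗ[ℤ] ℤ) (hsymm : ∀ x y, B x y = B y x)
    (h : ∃ v : L, B v v = 1 ∨ B v v = -1 ∨ B v v = 2 ∨ B v v = -2) :
    Function.Surjective
      (LinearEquiv.det.comp (isometryGroup (fun x y => B x y)).subtype) ∧
    ∃ s : ℤˣ →* ↥(isometryGroup (fun x y => B x y)),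
      (LinearEquiv.det.comp (isometryGroup (fun x y => B x y)).subtype).comp s =
        MonoidHom.id ℤˣ := by
  obtain ⟨v, hBv⟩ := h
  have hv : B.IsReflective v := .of_dvd_two B <| by
    rcases hBv with hBv | hBv | hBv | hBv <;> rw [hBv] <;> decide
  have hv2 := hv.coroot_apply_self B
  let r : isometryGroup (fun x y => B x y) :=
    ⟨Module.reflection hv2, hv.isOrthogonal_reflection B ⟨hsymm⟩⟩
  have hr : r * r = 1 := mul_eq_one_iff_eq_inv.mpr <| Subtype.ext (Module.reflection_inv hv2).symm
  obtain ⟨s, hs⟩ := exists_monoidHom_comp_eq_id_of_map_eq_neg_one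
    (LinearEquiv.det.comp (isometryGroup (fun x y => B x y)).subtype) hr
    (Module.det_reflection hv2)
  exact ⟨fun u => ⟨s u, DFunLike.congr_fun hs u⟩, s, hs⟩
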